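/- arXiv:1705.02884 — 4 statements merged into one kernel-verified Lean document; each statement's English description precedes it below -/
import Mathlib

section
/- Suppose a concurrent data structure satisfies CDS-Specific Equivalence: for any concurrent history H and sequential history S, if a method m_x in H and a method m_y in S have equal invocation events and the AbDS in the pre-state of m_x's LP equals the AbDS in the pre-state of m_y, then their response events are equal and the AbDS in the post-state of m_x's LP equals the AbDS in the post-state of m_y. Then for every method m_x (enumerated by LP order), the AbDS in the pre-state of the LP of m_x in H equals the AbDS in the pre-state of m_x in the constructed sequential history CS(H). -/
/-- Methods are enumerated (by LP order) as `m_0, m_1, ...`.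
`preC x`/`postC x` denote the abstract data structure (AbDS) in the pre/post
state of the LP of method `m_x` in the concurrent history `H`; `preS x`/`postS x`
denote the AbDS in the pre/post state of `m_x` in the constructed sequential
history `CS(H)`; `invH, respH` (resp. `invS, respS`) are the invocation and
response events of the methods in `H` (resp. `CS(H)`).  Assuming:
CDS-Specific Equivalence; only LP events change the AbDS (so the AbDS after the
LP of `m_x` equals the AbDS before the LP of `m_{x+1}`); in the sequential
execution the AbDS after the response of `m_x` equals the AbDS before the
invocation of `m_{x+1}`; `H` and `CS(H)` agree on invocation events; and both
start from the same initial AbDS — then for every method `m_x`, the AbDS in the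
pre-state of the LP of `m_x` in `H` equals the AbDS in the pre-state of `m_x`
in `CS(H)`. -/
theorem pre_state_abds_equal
    (A I R : Type)
    (preC postC preS postS : ℕ → A)
    (invH invS : ℕ → I) (respH respS : ℕ → R)
    -- CDS-Specific Equivalence
    (hCDSEquiv : ∀ x, preC x = preS x → invH x = invS x →
        respH x = respS x ∧ postC x = postS x)
    -- only LP events change the AbDS in the concurrent execution
    (hChainC : ∀ x, postC x = preC (x + 1))
    -- sequential execution: AbDS after m_x's response = AbDS before m_{x+1}
    (hChainS : ∀ x, postS x = preS (x + 1))
    -- H and CS(H) agree on all invocation events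
    (hInv : ∀ x, invH x = invS x)
    -- both executions start with the same initial AbDS
    (hInit : preC 0 = preS 0) :
    ∀ x, preC x = preS x := by
  intro x
  induction x with
  | zero => exact hInit
  | succ n ih =>
    calc preC (n + 1) = postC n := (hChainC n).symm
      _ = postS n := (hCDSEquiv n ih (hInv n)).2
      _ = preS (n + 1) := hChainS n
end

section
/- In any reachable global state S of the lazy list, for every node n in S with n.next ≠ null, the key of n is strictly less than the key of n.next; i.e., the list is strictly sorted by key. -/
/-- A global state of the lazy list.  `val` gives the (immutable) key of each
node, `nxt` its next pointer (`none` = null), `marked` its marked flag,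
`lockd` whether it is currently locked, and `mem` whether it is a node of the
list (has been linked into the list).  `head` and `tail` are the sentinels. -/
structure LazyState (Node : Type) where
  val    : Node → ℤ
  nxt    : Node → Option Node
  marked : Node → Bool
  lockd  : Node → Bool
  mem    : Node → Prop
  head   : Node
  tail   : Node

variable {Node : Type} [DecidableEq Node]

/-- Pointwise function update. -/
def upd {α : Type} (f : Node → α) (n : Node) (a : α) : Node → α :=
  fun m => if m = n then a else f m

/-- `ReachL S n`: node `n` is reachable from `Head` via next pointers. -/
def ReachL (S : LazyState Node) (n : Node) : Prop :=
  Relation.ReflTransGen (fun a b => S.nxt a = some b) S.head n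

/-- The abstract set: unmarked nodes reachable from `Head`. -/
def AbS (S : LazyState Node) : Set Node :=
  {n | ReachL S n ∧ S.marked n = false}

/-- The atomic events of the lazy list that change the global state:
locking/unlocking; creation of a fresh node `n3` (with key strictly between
the keys of the adjacent nodes `n1, n2` located by `Locate`) and setting
`n3.next := n2`; the `Add` LP write `n1.next := n3`; the logical-removal
(marking) LP write `n2.marked := true`; and the physical removal write
`n1.next := n2.next`.  Next pointers are only changed for locked unmarked
nodes; the validation performed by `Locate` (cf. the lemmas of the paper)
guarantees that the successor of the node being removed is unmarked. -/
inductive LStep : LazyState Node → LazyState Node → Prop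
  | lock (S : LazyState Node) (n : Node) :
      LStep S { S with lockd := upd S.lockd n true }
  | unlock (S : LazyState Node) (n : Node) :
      LStep S { S with lockd := upd S.lockd n false }
  | newNode (S : LazyState Node) (n1 n2 n3 : Node) :
      S.lockd n1 = true → S.lockd n2 = true →
      S.marked n1 = false → S.marked n2 = false →
      S.nxt n1 = some n2 →
      ¬ S.mem n3 → ¬ ReachL S n3 → (∀ m, S.nxt m ≠ some n3) →
      S.marked n3 = false →
      S.val n1 < S.val n3 → S.val n3 < S.val n2 →
      LStep S { S with nxt := upd S.nxt n3 (some n2) }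
  | addLP (S : LazyState Node) (n1 n2 n3 : Node) :
      S.lockd n1 = true → S.lockd n2 = true →
      S.marked n1 = false → S.marked n2 = false →
      S.nxt n1 = some n2 →
      ¬ S.mem n3 → ¬ ReachL S n3 → (∀ m, S.nxt m ≠ some n3) →
      S.marked n3 = false → S.nxt n3 = some n2 →
      S.val n1 < S.val n3 → S.val n3 < S.val n2 →
      LStep S { S with nxt := upd S.nxt n1 (some n3),
                       mem := fun m => S.mem m ∨ m = n3 }
  | mark (S : LazyState Node) (n1 n2 : Node) :
      S.lockd n1 = true → S.lockd n2 = true →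
      S.marked n1 = false → S.marked n2 = false →
      S.nxt n1 = some n2 →
      (∀ m, S.nxt n2 = some m → S.marked m = false) →
      LStep S { S with marked := upd S.marked n2 true }
  | remLP (S : LazyState Node) (n1 n2 : Node) :
      S.lockd n1 = true → S.lockd n2 = true →
      S.marked n1 = false → S.marked n2 = true →
      S.nxt n1 = some n2 →
      (∀ m, S.nxt n2 = some m → S.marked m = false) →
      LStep S { S with nxt := upd S.nxt n1 (S.nxt n2) }

/-- The initial state: `Head.next = Tail`, both sentinels unmarked, all other
nodes not yet in the list, `Head` carrying key `-∞` and `Tail` key `+∞`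
(modelled by: `Head`'s key is strictly smaller, and `Tail`'s key strictly
larger, than every other key). -/
def LInit (S : LazyState Node) : Prop :=
  S.head ≠ S.tail ∧
  S.nxt S.head = some S.tail ∧ S.nxt S.tail = none ∧
  (∀ n, n ≠ S.head → n ≠ S.tail → S.nxt n = none) ∧
  (∀ n, S.marked n = false) ∧
  (∀ n, S.mem n ↔ n = S.head ∨ n = S.tail) ∧
  (∀ n, n ≠ S.head → S.val S.head < S.val n) ∧
  (∀ n, n ≠ S.tail → S.val n < S.val S.tail)

/-- A reachable global state of the lazy list. -/
def LReachable (S : LazyState Node) : Prop :=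
  ∃ S0, LInit S0 ∧ Relation.ReflTransGen LStep S0 S

def KeySorted {α : Type} [LT α] (val : Node → α) (nxt : Node → Option Node) : Prop :=
  ∀ n n', nxt n = some n' → val n < val n'

theorem KeySorted.upd {α : Type} [LT α] {val : Node → α} {nxt : Node → Option Node}
    (h : KeySorted val nxt) {n : Node} {o : Option Node} (hlt : ∀ m ∈ o, val n < val m) :
    KeySorted val (upd nxt n o) := by
  intro m m' hm
  unfold _root_.upd at hm
  split_ifs at hm with hmn
  · exact hmn ▸ hlt m' hm
  · exact h m m' hm

theorem LInit.keySorted {S : LazyState Node} (h : LInit S) : KeySorted S.val S.nxt := by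
  obtain ⟨hne, hhead, htail, hother, -, -, hhead_min, -⟩ := h
  intro n n' hn
  by_cases hn_head : n = S.head
  · subst hn_head
    obtain rfl : n' = S.tail := Option.some_injective _ (hn.symm.trans hhead)
    exact hhead_min _ hne.symm
  · by_cases hn_tail : n = S.tail
    · simp [hn_tail, htail] at hn
    · simp [hother n hn_head hn_tail] at hn

theorem LStep.keySorted {S T : LazyState Node} (h : LStep S T) (hS : KeySorted S.val S.nxt) :
    KeySorted T.val T.nxt := by
  cases h with
  | lock | unlock | mark => exact hS
  | newNode n1 n2 n3 _ _ _ _ _ _ _ _ _ _ h32 =>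
    exact hS.upd fun m hm => Option.mem_some_iff.mp hm ▸ h32
  | addLP n1 n2 n3 _ _ _ _ _ _ _ _ _ _ h13 _ =>
    exact hS.upd fun m hm => Option.mem_some_iff.mp hm ▸ h13
  | remLP n1 n2 _ _ _ _ h12 _ =>
    exact hS.upd fun m hm => (hS _ _ h12).trans (hS _ _ hm)

theorem LReachable.keySorted {S : LazyState Node} (h : LReachable S) : KeySorted S.val S.nxt := by
  obtain ⟨S0, hinit, hsteps⟩ := h
  induction hsteps with
  | refl => exact hinit.keySorted
  | tail _ hstep ih => exact hstep.keySorted ih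

/-- In any reachable global state `S` of the lazy list, for
every node `n` with `n.next ≠ null`, the key of `n` is strictly less than the
key of `n.next`: the list is strictly sorted by key. -/
theorem lazy_list_strictly_sorted (S : LazyState Node)
    (hS : LReachable S) :
    ∀ n n', S.nxt n = some n' → S.val n < S.val n' :=
  hS.keySorted
end

section
/- Once a node of the lazy list is marked, it remains marked in all future states, and its next pointer never changes in any future state. -/
variable {Node : Type} [DecidableEq Node]

/-! Marking only ever sets flags, and every event that rewrites a next pointer requires the
rewritten node to be unmarked, so a marked node is untouched by a single step; induction along
the execution does the rest. -/

theorem upd_of_ne {α : Type} {f : Node → α} {n m : Node} {a : α} (h : m ≠ n) :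
    upd f n a m = f m :=
  if_neg h

namespace LStep

variable {S S' : LazyState Node} {n : Node}

theorem marked_of_marked (h : LStep S S') (hn : S.marked n = true) : S'.marked n = true := by
  cases h with
  | mark => simp [upd, hn]
  | _ => exact hn

theorem nxt_eq_of_marked (h : LStep S S') (hn : S.marked n = true) : S'.nxt n = S.nxt n := by
  have ne_of_unmarked {m : Node} (hm : S.marked m = false) : n ≠ m :=
    ne_of_apply_ne S.marked (by simp [hn, hm])
  cases h with
  | newNode _ _ _ _ _ _ _ _ _ _ _ hn3 => exact upd_of_ne (ne_of_unmarked hn3)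
  | addLP _ _ _ _ _ hn1 => exact upd_of_ne (ne_of_unmarked hn1)
  | remLP _ _ _ _ hn1 => exact upd_of_ne (ne_of_unmarked hn1)
  | _ => rfl

end LStep

/-- Once a node of the lazy list is marked, it remains marked
in all future states, and its next pointer never changes in any future state. -/
theorem lazy_list_marked_forever_and_next_frozen (S S' : LazyState Node)
    (hfut : Relation.ReflTransGen LStep S S') :
    ∀ n, S.marked n = true → S'.marked n = true ∧ S'.nxt n = S.nxt n := by
  intro n hm
  induction hfut with
  | refl => exact ⟨hm, rfl⟩
  | tail _ hstep ih =>
    exact ⟨hstep.marked_of_marked ih.1, (hstep.nxt_eq_of_marked ih.1).trans ih.2⟩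
end

section
/- In the lazy list, an unmarked node can never come to point (via its next field) to a marked node it did not already point to: if in state S node n_p is unmarked, node n_q is marked, and n_p.next ≠ n_q, then in every future state S', n_p.next ≠ n_q. -/
variable {Node : Type} [DecidableEq Node]

/-! Marks are never removed, and every event that redirects a next pointer makes it point to a node
that is unmarked at that moment: the fresh node of an `Add`, its unmarked successor, or the successor
of a node being removed, which the validation guarantees to be unmarked. Hence a pointer to a node
that is already marked can never be created. -/

namespace LStep

variable {S S' : LazyState Node}

theorem marked_mono (h : LStep S S') {n : Node} (hn : S.marked n = true) :
    S'.marked n = true := by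
  cases h with
  | mark => simp only [upd]; split_ifs <;> simp [hn]
  | _ => exact hn

theorem marked_mono_of_reflTransGen (hfut : Relation.ReflTransGen LStep S S') {n : Node}
    (hn : S.marked n = true) : S'.marked n = true := by
  induction hfut with
  | refl => exact hn
  | tail _ hstep ih => exact hstep.marked_mono ih

theorem nxt_eq_or_unmarked (h : LStep S S') (n : Node) :
    S'.nxt n = S.nxt n ∨ ∀ m, S'.nxt n = some m → S.marked m = false := by
  cases h with
  | newNode _ n2 _ _ _ _ hm2 =>
    simp only [upd]; split_ifs
    · exact .inr fun m hm => Option.some_inj.mp hm ▸ hm2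
    · exact .inl rfl
  | addLP _ _ n3 _ _ _ _ _ _ _ _ hm3 =>
    simp only [upd]; split_ifs
    · exact .inr fun m hm => Option.some_inj.mp hm ▸ hm3
    · exact .inl rfl
  | remLP _ _ _ _ _ _ _ hsucc =>
    simp only [upd]; split_ifs
    · exact .inr hsucc
    · exact .inl rfl
  | _ => exact .inl rfl

theorem nxt_ne_some_of_marked (h : LStep S S') {np nq : Node} (hq : S.marked nq = true)
    (hne : S.nxt np ≠ some nq) : S'.nxt np ≠ some nq := by
  rcases h.nxt_eq_or_unmarked np with hunchanged | hunmarked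
  · exact hunchanged ▸ hne
  · intro hpq
    simp [hunmarked nq hpq] at hq

end LStep

theorem lazy_list_unmarked_never_points_to_marked_general
    (S S' : LazyState Node)
    (hfut : Relation.ReflTransGen LStep S S')
    (np nq : Node)
    (hq : S.marked nq = true)
    (hne : S.nxt np ≠ some nq) :
    S'.nxt np ≠ some nq := by
  induction hfut with
  | refl => exact hne
  | tail hprefix hstep ih =>
    exact hstep.nxt_ne_some_of_marked (LStep.marked_mono_of_reflTransGen hprefix hq) ih

/-- In the lazy list, an unmarked node can never come to
point (via its next field) to a marked node it did not already point to: if in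
state `S` node `n_p` is unmarked, node `n_q` is marked, and `n_p.next ≠ n_q`,
then in every future state `S'`, `n_p.next ≠ n_q`. -/
theorem lazy_list_unmarked_never_points_to_marked
    (S S' : LazyState Node)
    (hfut : Relation.ReflTransGen LStep S S')
    (np nq : Node)
    (hp : S.marked np = false) (hq : S.marked nq = true)
    (hne : S.nxt np ≠ some nq) :
    S'.nxt np ≠ some nq :=
  lazy_list_unmarked_never_points_to_marked_general S S' hfut np nq hq hne
end
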